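/- Let k be a differential field of characteristic 0 with field of constants C ≠ k, let R = k[∂; 1, '], let A ∈ M(n,R), and set M := R^n / R^n A. For any differential field extension l of k whose field of constants equals C, the contravariant solution space V := Hom_R(M, l) satisfies dim_C V ≤ dim_k M. -/

import Mathlib

/-!
Solutions `v₁, …, v_m ∈ Hom_R(M, l)` that are independent over the constants are independent
over `l` as functions on `M`: in a shortest nontrivial relation `∑ aᵢ vᵢ = 0` normalized
by `a_j = 1`, applying `∂` and using `vᵢ(∂ z) = (vᵢ z)'` gives the shorter relation
`∑ aᵢ' vᵢ = 0`, so every `aᵢ' = 0`; the `aᵢ` then lie in `C`, a contradiction. Since each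
`vᵢ` is `k`-semilinear, restriction to a `k`-basis of `M` embeds their `l`-span into
`l^(dim_k M)`.
-/

/-- `R`, together with the embedding `ι : k →+* R` and the element `x : R`, is a
left skew polynomial ring `k[x; α, δ]`: `δ` is an `α`-derivation, the commutation
rule `x * a = α a * x + δ a` holds, and every element of `R` is uniquely a
polynomial `a₀ + a₁ x + ⋯ + aₘ xᵐ` with coefficients in `k`. -/
structure IsSkewPolynomialRing (k R : Type*) [Field k] [Ring R]
    (α : k →+* k) (δ : k → k) (ι : k →+* R) (x : R) : Prop where
  delta_add : ∀ a b : k, δ (a + b) = δ a + δ b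
  delta_mul : ∀ a b : k, δ (a * b) = δ a * α b + a * δ b
  commute_x : ∀ a : k, x * ι a = ι (α a) * x + ι (δ a)
  repr_bijective : Function.Bijective fun p : ℕ →₀ k => p.sum fun i a => ι a * x ^ i

/-- The degree of a (nonzero) element of the skew polynomial ring, read off from its
unique representation as a polynomial in `x`. (Junk value `0` at `r = 0`.) -/
noncomputable def skewDeg {k R : Type*} [Field k] [Ring R] {α : k →+* k} {δ : k → k}
    {ι : k →+* R} {x : R} (h : IsSkewPolynomialRing k R α δ ι x) (r : R) : ℕ :=
  (((Equiv.ofBijective _ h.repr_bijective).symm r).support.max).unbotD 0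

/-- `dim_k (Rⁿ / Rⁿ A) ∈ ℕ ∪ {∞}`: the `k`-dimension of the quotient of the space of
row vectors `Rⁿ` by the left `R`-submodule `Rⁿ A` spanned by the rows of `A`. -/
noncomputable def quotDim (k : Type*) {R : Type*} [Field k] [Ring R] (ι : k →+* R)
    {n : ℕ} (A : Matrix (Fin n) (Fin n) R) : ℕ∞ :=
  letI : Module k ((Fin n → R) ⧸ Submodule.span R (Set.range fun i => A i)) :=
    Module.compHom _ ι
  Cardinal.toENat
    (Module.rank k ((Fin n → R) ⧸ Submodule.span R (Set.range fun i => A i)))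

section Wronskian

variable {l M ι : Type*} [Field l] [Fintype ι] {dl : l → l}

theorem sum_deriv_mul_eq_zero
    (hdl_add : ∀ a b : l, dl (a + b) = dl a + dl b)
    (hdl_mul : ∀ a b : l, dl (a * b) = dl a * b + a * dl b)
    {V : ι → M → l} {D : M → M} (hD : ∀ i z, V i (D z) = dl (V i z))
    {a : ι → l} (ha : ∀ z, ∑ i, a i * V i z = 0) (z : M) :
    ∑ i, dl (a i) * V i z = 0 := by
  let δ : l →+ l := AddMonoidHom.mk' dl hdl_add
  have h := congrArg δ (ha z)
  simp only [map_sum, map_zero, δ, AddMonoidHom.mk'_apply, hdl_mul, ← hD,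
    Finset.sum_add_distrib, ha (D z), add_zero] at h
  exact h

theorem eq_zero_of_forall_sum_mul_eq_zero
    (hdl_add : ∀ a b : l, dl (a + b) = dl a + dl b)
    (hdl_mul : ∀ a b : l, dl (a * b) = dl a * b + a * dl b)
    {V : ι → M → l} {D : M → M} (hD : ∀ i z, V i (D z) = dl (V i z))
    (hind : ∀ c : ι → l, (∀ i, dl (c i) = 0) → (∀ z, ∑ i, c i * V i z = 0) → c = 0)
    {a : ι → l} (ha : ∀ z, ∑ i, a i * V i z = 0) : a = 0 := by
  have dl_zero : dl 0 = 0 := (AddMonoidHom.mk' dl hdl_add).map_zero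
  have dl_one : dl 1 = 0 := by simpa using hdl_mul 1 1
  suffices key : ∀ s : Finset ι, ∀ a : ι → l, (∀ i ∉ s, a i = 0) →
      (∀ z, ∑ i, a i * V i z = 0) → a = 0 from
    key Finset.univ a (fun i hi => absurd (Finset.mem_univ i) hi) ha
  classical
  intro s
  induction s using Finset.strongInduction with
  | H s IH =>
  intro a hs ha
  by_contra hne
  obtain ⟨j, hj⟩ := Function.ne_iff.mp hne
  have hjs : j ∈ s := by_contra fun h => hj (hs j h)
  -- Normalizing `a j` to `1` makes the derivative of the relation shorter: it misses `j`.
  set a' : ι → l := fun i => (a j)⁻¹ * a i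
  have ha' : ∀ z, ∑ i, a' i * V i z = 0 := fun z => by
    simp only [a', mul_assoc, ← Finset.mul_sum, ha z, mul_zero]
  have ha'j : a' j = 1 := inv_mul_cancel₀ hj
  have hda' : (fun i => dl (a' i)) = 0 := by
    refine IH (s.erase j) (Finset.erase_ssubset hjs) _ (fun i hi => ?_)
      (sum_deriv_mul_eq_zero hdl_add hdl_mul hD ha')
    by_cases hij : i = j
    · rw [hij, ha'j, dl_one]
    · simp [a', hs i (by simpa [hij] using hi), dl_zero]
  have := congrFun (hind a' (congrFun hda') ha') j
  simp [ha'j] at this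

end Wronskian

theorem natCast_le_toENat_rank_of_linearIndependent_semilinearMap {k l M : Type*} [Field k]
    [Field l] [AddCommGroup M] [Module k M] {σ : k →+* l} {m : ℕ}
    {w : Fin m → M →ₛₗ[σ] l}
    (hw : LinearIndependent l w) : (m : ℕ∞) ≤ (Module.rank k M).toENat := by
  by_cases hfin : Module.Finite k M
  · let b := Module.finBasis k M
    let restrict : (M →ₛₗ[σ] l) →ₗ[l] (Fin (Module.finrank k M) → l) :=
      { toFun := fun f j => f (b j)
        map_add' := fun _ _ => rfl
        map_smul' := fun _ _ => rfl }
    have hrestrict : Function.Injective restrict := fun f g hfg =>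
      b.ext fun j => congrFun hfg j
    have := (hw.map' restrict (LinearMap.ker_eq_bot.mpr hrestrict)).fintype_card_le_finrank
    rw [← Module.finrank_eq_rank, Cardinal.toENat_nat]
    simpa using this
  · rw [Cardinal.toENat_eq_top.mpr (not_lt.mp (mt Module.rank_lt_aleph0_iff.mp hfin))]
    exact le_top

theorem statement14_general {k R l : Type*} [Field k] [Ring R] [Field l]
    (d : k → k) (ι : k →+* R) (x : R)
    (e : k →+* l) (dl : l → l)
    (hdl_add : ∀ a b : l, dl (a + b) = dl a + dl b)
    (hdl_mul : ∀ a b : l, dl (a * b) = dl a * b + a * dl b)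
    -- the field of constants of `l` equals `C`, the field of constants of `k`
    (hconst : ∀ y : l, dl y = 0 → ∃ c : k, d c = 0 ∧ y = e c)
    -- `l` is a left `R`-module via `a · y = e a * y` and `∂ · y = dl y`
    [Module R l]
    (hsmul_const : ∀ (a : k) (y : l), ι a • y = e a * y)
    (hsmul_x : ∀ y : l, x • y = dl y)
    {n : ℕ} (A : Matrix (Fin n) (Fin n) R) :
    ∀ (m : ℕ)
      (v : Fin m → (((Fin n → R) ⧸ Submodule.span R (Set.range fun i => A i)) →ₗ[R] l)),
      (∀ c : Fin m → k, (∀ i, d (c i) = 0) →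
        (∀ z, ∑ i, e (c i) * v i z = 0) → ∀ i, c i = 0) →
      (m : ℕ∞) ≤ quotDim k ι A := by
  intro m v hind
  let _ : Module k ((Fin n → R) ⧸ Submodule.span R (Set.range fun i => A i)) :=
    Module.compHom _ ι
  have hind_constants : ∀ c : Fin m → l, (∀ i, dl (c i) = 0) →
      (∀ z, ∑ i, c i * v i z = 0) → c = 0 := by
    intro c hc hrel
    choose c₀ hc₀ hc_eq using fun i => hconst (c i) (hc i)
    have := hind c₀ hc₀ (by simpa only [← hc_eq] using hrel)
    ext i
    simp [hc_eq, this]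
  let w i : _ →ₛₗ[e] l :=
    { toFun := v i
      map_add' := (v i).map_add
      map_smul' := fun c z => by
        change v i (ι c • z) = e c * v i z
        rw [map_smul, hsmul_const] }
  have hw : LinearIndependent l w := by
    refine Fintype.linearIndependent_iff.mpr fun a ha => congrFun ?_
    refine eq_zero_of_forall_sum_mul_eq_zero hdl_add hdl_mul (V := fun i z => v i z)
      (D := (x • ·)) (fun i z => by rw [map_smul, hsmul_x]) hind_constants fun z => ?_
    simpa [w] using LinearMap.congr_fun ha z
  exact natCast_le_toENat_rank_of_linearIndependent_semilinearMap hw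

/-- Let `k` be a differential field of characteristic `0` with field
of constants `C ≠ k`, `R = k[∂; 1, ']`, `A ∈ M(n,R)`, and `M := Rⁿ / Rⁿ A`.  For any
differential field extension `l` of `k` whose field of constants equals `C`, the
contravariant solution space `V := Hom_R(M, l)` satisfies `dim_C V ≤ dim_k M`:
every `C`-linearly independent family in `V` has at most `dim_k M` members. -/
theorem statement14 {k R l : Type*} [Field k] [CharZero k] [Ring R] [Field l]
    (d : k → k) (ι : k →+* R) (x : R)
    (h : IsSkewPolynomialRing k R (RingHom.id k) d ι x)
    (hC : ∃ a : k, d a ≠ 0)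
    (e : k →+* l) (dl : l → l)
    (hdl_add : ∀ a b : l, dl (a + b) = dl a + dl b)
    (hdl_mul : ∀ a b : l, dl (a * b) = dl a * b + a * dl b)
    (he : ∀ a : k, dl (e a) = e (d a))
    -- the field of constants of `l` equals `C`, the field of constants of `k`
    (hconst : ∀ y : l, dl y = 0 → ∃ c : k, d c = 0 ∧ y = e c)
    -- `l` is a left `R`-module via `a · y = e a * y` and `∂ · y = dl y`
    [Module R l]
    (hsmul_const : ∀ (a : k) (y : l), ι a • y = e a * y)
    (hsmul_x : ∀ y : l, x • y = dl y)
    {n : ℕ} (A : Matrix (Fin n) (Fin n) R) :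
    ∀ (m : ℕ)
      (v : Fin m → (((Fin n → R) ⧸ Submodule.span R (Set.range fun i => A i)) →ₗ[R] l)),
      (∀ c : Fin m → k, (∀ i, d (c i) = 0) →
        (∀ z, ∑ i, e (c i) * v i z = 0) → ∀ i, c i = 0) →
      (m : ℕ∞) ≤ quotDim k ι A :=
  statement14_general d ι x e dl hdl_add hdl_mul hconst hsmul_const hsmul_x A
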